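/- arXiv:2106.05320 — 3 statements merged into one kernel-verified Lean document; each statement's English description precedes it below -/
import Mathlib

section
/- Suppose real numbers f_0,...,f_k and f_0^1,...,f_k^1 satisfy, for j = k−k̲+1, ..., k: |f_{j-1} − f_j + f_j^1 T| ≤ L T²/2 and |f_j^1 − f_{j-1}^1| ≤ L T, and additionally |f_k| ≤ N and |f_{k−k̲}| ≤ N. Then f_k^1 ≤ (1/2) L T k̲ + 2N/(T k̲). -/
theorem stmt_8 (L N T : ℝ) (hL : 0 ≤ L) (hN : 0 ≤ N) (hT : 0 < T)
    (k kl : ℕ) (hkl : 1 ≤ kl) (hk : kl ≤ k)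
    (f f1 : ℕ → ℝ)
    (h1 : ∀ j : ℕ, k - kl + 1 ≤ j → j ≤ k → |f (j - 1) - f j + f1 j * T| ≤ L * T ^ 2 / 2)
    (h2 : ∀ j : ℕ, k - kl + 1 ≤ j → j ≤ k → |f1 j - f1 (j - 1)| ≤ L * T)
    (h3 : |f k| ≤ N) (h4 : |f (k - kl)| ≤ N) :
    f1 k ≤ (1 / 2) * L * T * kl + 2 * N / (T * kl) := by
  -- Claim A: Lipschitz control of f1
  have hA : ∀ m : ℕ, m ≤ kl → f1 k - f1 (k - m) ≤ L * T * m := by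
    intro m
    induction m with
    | zero => intro _; simp
    | succ n ih =>
      intro hm
      have hn : n ≤ kl := Nat.le_of_succ_le hm
      have hhi : k - n ≤ k := Nat.sub_le _ _
      have hlo : k - kl + 1 ≤ k - n := by omega
      have := h2 (k - n) hlo hhi
      have habs : f1 (k - n) - f1 (k - n - 1) ≤ L * T := (abs_le.mp this).2
      have hsub : k - n - 1 = k - (n + 1) := by omega
      rw [hsub] at habs
      have := ih hn
      push_cast
      nlinarith
  -- Claim B: summed bound
  have hB : ∀ m : ℕ, m ≤ kl →
      f (k - m) - f k ≤ -(T * m) * f1 k + L * T ^ 2 * m ^ 2 / 2 := by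
    intro m
    induction m with
    | zero => intro _; simp
    | succ n ih =>
      intro hm
      have hn : n ≤ kl := Nat.le_of_succ_le hm
      have hhi : k - n ≤ k := Nat.sub_le _ _
      have hlo : k - kl + 1 ≤ k - n := by omega
      have hb1 := (abs_le.mp (h1 (k - n) hlo hhi)).2
      have hsub : k - n - 1 = k - (n + 1) := by omega
      rw [hsub] at hb1
      have hA' := hA n hn
      have := ih hn
      push_cast
      nlinarith [hT.le, mul_nonneg hL (sq_nonneg T)]
  have hBk := hB kl le_rfl
  have hlow : -(2 * N) ≤ f (k - kl) - f k := by
    have := abs_le.mp h3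
    have := abs_le.mp h4
    linarith
  have hklpos : (0 : ℝ) < kl := by exact_mod_cast hkl
  have hTk : (0:ℝ) < T * kl := mul_pos hT hklpos
  have key : T * kl * f1 k ≤ 2 * N + L * T ^ 2 * kl ^ 2 / 2 := by nlinarith
  have : f1 k ≤ (2 * N + L * T ^ 2 * kl ^ 2 / 2) / (T * kl) :=
    (le_div_iff₀' hTk).mpr key
  have heq : (2 * N + L * T ^ 2 * kl ^ 2 / 2) / (T * kl)
      = (1 / 2) * L * T * kl + 2 * N / (T * kl) := by
    field_simp
    ring
  linarith [heq ▸ this]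
end

section
/- Under the same hypotheses as the upper-bound lemma but with the symmetric constraints (|f_{j-1} − f_j + f_j^1 T| ≤ L T²/2, |f_j^1 − f_{j-1}^1| ≤ L T for j = k−k̲+1,...,k, |f_k| ≤ N, |f_{k−k̲}| ≤ N), one also has f_k^1 ≥ −((1/2) L T k̲ + 2N/(T k̲)). -/
theorem stmt_9 (L N T : ℝ) (hL : 0 ≤ L) (hN : 0 ≤ N) (hT : 0 < T)
    (k kl : ℕ) (hkl : 1 ≤ kl) (hk : kl ≤ k)
    (f f1 : ℕ → ℝ)
    (h1 : ∀ j : ℕ, k - kl + 1 ≤ j → j ≤ k → |f (j - 1) - f j + f1 j * T| ≤ L * T ^ 2 / 2)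
    (h2 : ∀ j : ℕ, k - kl + 1 ≤ j → j ≤ k → |f1 j - f1 (j - 1)| ≤ L * T)
    (h3 : |f k| ≤ N) (h4 : |f (k - kl)| ≤ N) :
    f1 k ≥ -((1 / 2) * L * T * kl + 2 * N / (T * kl)) := by
  set m := k - kl with hm
  have hmk : m + kl = k := Nat.sub_add_cancel hk
  -- velocity bound
  have hvel : ∀ n : ℕ, n ≤ kl → |f1 k - f1 (m + (kl - n))| ≤ L * T * n := by
    intro n
    induction n with
    | zero =>
      intro _
      simp [hmk]
    | succ n ih =>
      intro hn
      have hn' : n ≤ kl := Nat.le_of_succ_le hn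
      have hpos : 1 ≤ kl - n := by omega
      have hj1 : k - kl + 1 ≤ m + (kl - n) := by omega
      have hj2 : m + (kl - n) ≤ k := by omega
      have hstep := h2 (m + (kl - n)) hj1 hj2
      have hsub : m + (kl - n) - 1 = m + (kl - (n + 1)) := by omega
      rw [hsub] at hstep
      have htri := abs_sub_le (f1 k) (f1 (m + (kl - n))) (f1 (m + (kl - (n + 1))))
      have := ih hn'
      push_cast
      linarith
  have hterm : ∀ i ∈ Finset.range kl,
      f (m + i + 1) - f (m + i)
        ≤ f1 k * T + L * T ^ 2 * ((kl - 1 - i : ℕ) : ℝ) + L * T ^ 2 / 2 := by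
    intro i hi
    rw [Finset.mem_range] at hi
    have hj1 : k - kl + 1 ≤ m + i + 1 := by omega
    have hj2 : m + i + 1 ≤ k := by omega
    have hstep := h1 (m + i + 1) hj1 hj2
    have hsub : m + i + 1 - 1 = m + i := by omega
    rw [hsub] at hstep
    have h1' : -(L * T ^ 2 / 2) ≤ f (m + i) - f (m + i + 1) + f1 (m + i + 1) * T :=
      neg_le_of_abs_le hstep
    have hn : kl - 1 - i ≤ kl := by omega
    have hv := hvel (kl - 1 - i) hn
    have hidx : kl - (kl - 1 - i) = i + 1 := by omega
    rw [hidx] at hv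
    have hv' : f1 (m + (i + 1)) - f1 k ≤ L * T * ((kl - 1 - i : ℕ) : ℝ) := by
      have := neg_le_of_abs_le hv
      linarith
    have hT2 : 0 ≤ T := le_of_lt hT
    have hmul : (f1 (m + (i + 1)) - f1 k) * T ≤ L * T * ((kl - 1 - i : ℕ) : ℝ) * T :=
      mul_le_mul_of_nonneg_right hv' hT2
    have hidx2 : m + (i + 1) = m + i + 1 := by omega
    rw [hidx2] at hmul
    nlinarith
  have htel : ∑ i ∈ Finset.range kl, (f (m + i + 1) - f (m + i)) = f k - f m := by
    have := Finset.sum_range_sub (fun i => f (m + i)) kl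
    simpa [hmk, add_assoc] using this
  have hsumub : f k - f m ≤ ∑ i ∈ Finset.range kl,
      (f1 k * T + L * T ^ 2 * ((kl - 1 - i : ℕ) : ℝ) + L * T ^ 2 / 2) := by
    rw [← htel]
    exact Finset.sum_le_sum hterm
  -- compute the sum on the right
  have hgauss : ∑ i ∈ Finset.range kl, ((kl - 1 - i : ℕ) : ℝ)
      = kl * (kl - 1) / 2 := by
    rw [Finset.sum_range_reflect (fun i => ((i : ℕ) : ℝ)) kl]
    have h2' := Finset.sum_range_id_mul_two kl
    have hcast := congrArg (fun x : ℕ => (x : ℝ)) h2'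
    push_cast [Nat.cast_sub hkl] at hcast
    push_cast
    linarith
  have hsum : ∑ i ∈ Finset.range kl,
      (f1 k * T + L * T ^ 2 * ((kl - 1 - i : ℕ) : ℝ) + L * T ^ 2 / 2)
      = kl * (f1 k * T) + L * T ^ 2 * (kl * (kl - 1) / 2) + kl * (L * T ^ 2 / 2) := by
    simp only [Finset.sum_add_distrib, ← Finset.mul_sum, hgauss, Finset.sum_const,
      Finset.card_range, nsmul_eq_mul]
    ring
  rw [hsum] at hsumub
  have hfk : -N ≤ f k := (abs_le.mp h3).1
  have hfm : f m ≤ N := (abs_le.mp h4).2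
  have hklpos : (0 : ℝ) < kl := by exact_mod_cast hkl
  have hTk : 0 < T * kl := by positivity
  have hid : L * T ^ 2 * ((kl : ℝ) * (kl - 1) / 2) + kl * (L * T ^ 2 / 2)
      = (1 / 2) * L * T ^ 2 * (kl : ℝ) ^ 2 := by ring
  have key : -((1 / 2) * L * T ^ 2 * (kl : ℝ) ^ 2 + 2 * N) ≤ T * kl * f1 k := by
    nlinarith
  rw [ge_iff_le, show -((1 / 2) * L * T * kl + 2 * N / (T * kl))
      = (-((1 / 2) * L * T ^ 2 * (kl : ℝ) ^ 2 + 2 * N)) / (T * kl) from by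
        field_simp, div_le_iff₀ hTk]
  nlinarith [key]
end

section
/- If f_{j-1} ≤ f_j − f_j^1 T + L T²/2 holds for j = k−k̲+1,...,k, and f_{k−i}^1 ≥ f_k^1 − i L T for i = 1,...,k̲−1, then f_{k−k̲} ≤ f_k − k̲ T f_k^1 + L T² k̲²/2. -/
theorem stmt_11 (L T : ℝ) (hL : 0 ≤ L) (hT : 0 < T)
    (k kl : ℕ) (hkl : 1 ≤ kl) (hk : kl ≤ k)
    (f f1 : ℕ → ℝ)
    (h1 : ∀ j : ℕ, k - kl + 1 ≤ j → j ≤ k → f (j - 1) ≤ f j - f1 j * T + L * T ^ 2 / 2)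
    (h2 : ∀ i : ℕ, 1 ≤ i → i ≤ kl - 1 → f1 (k - i) ≥ f1 k - i * L * T) :
    f (k - kl) ≤ f k - kl * T * f1 k + L * T ^ 2 * kl ^ 2 / 2 := by
  have key : ∀ m : ℕ, 1 ≤ m → m ≤ kl →
      f (k - m) ≤ f k - m * T * f1 k + L * T ^ 2 * m ^ 2 / 2 := by
    intro m
    induction m with
    | zero => intro h; omega
    | succ n ih =>
      intro _ hm
      rcases Nat.eq_zero_or_pos n with hn | hn
      · subst hn
        have h := h1 k (by omega) le_rfl
        push_cast
        nlinarith [h]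
      · have ihh := ih hn (by omega)
        have hj := h1 (k - n) (by omega) (by omega)
        have hf1 := h2 n hn (by omega)
        have heq : k - n - 1 = k - (n + 1) := by omega
        rw [heq] at hj
        have hmul : (f1 k - n * L * T) * T ≤ f1 (k - n) * T :=
          mul_le_mul_of_nonneg_right hf1 hT.le
        push_cast
        nlinarith [hj, ihh, hmul]
  exact key kl hkl le_rfl
end
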